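/- Let (X,Σ,μ) be a Lebesgue probability space with an ergodic aperiodic measure preserving transformation θ, Tf = f∘θ, and let δ_n → 0 with δ_n ≤ γ_n for some sequence γ_n → 0 such that nγ_n increases to ∞. Then there exists f = (I-T)h with h ∈ L¹(μ) such that limsup_n δ_n^{-1}|M_n f| = ∞ μ-a.e. -/

import Mathlib

/-!
Since `θ` is aperiodic, `μ` has no atoms, so there are sets of arbitrarily small positive measure.
Given `N`, take such a set `B` with `μ B ≤ 1/N` and let `D` be the set of points whose first visit
to `B` happens at a positive multiple of `N`. The sets `θ⁻ⁱ D`, `0 ≤ i < N`, are disjoint, so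
`μ D ≤ 1/N`, and by ergodicity almost every orbit enters `A = B ∪ D` within `N` steps.

Choose `N_m` with `(m + 1) γ(N_m) ≤ 2⁻ᵐ`, the corresponding sets `A_m` and
`c_m = (m + 1) N_m γ(N_m)`; then `h = ∑ c_m 1_{A_m}` is integrable. Since
`M_j((I - T)h)(x) = (h x - h (θʲ x)) / j`, taking `j ≤ N_m` with `θʲ x ∈ A_m` and using that
`n γ_n` is nondecreasing gives
`δ_j⁻¹ |M_j f(x)| ≥ c_m / (N_m γ(N_m)) - h x / γ_1 = m + 1 - h x / γ_1`.
-/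

open MeasureTheory Filter Topology ENNReal

section

open Set Function

variable {X : Type*} {θ : X → X}

def IsFirstHitTime (θ : X → X) (B : Set X) (t : ℕ) (x : X) : Prop :=
  0 < t ∧ θ^[t] x ∈ B ∧ ∀ s, 0 < s → s < t → θ^[s] x ∉ B

namespace IsFirstHitTime

variable {B : Set X} {t t' : ℕ} {x : X}

theorem unique (h : IsFirstHitTime θ B t x) (h' : IsFirstHitTime θ B t' x) : t = t' := by
  by_contra hne
  rcases Nat.lt_or_gt_of_ne hne with hlt | hlt
  · exact h'.2.2 t h.1 hlt h.2.1
  · exact h.2.2 t' h'.1 hlt h'.2.1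

theorem iterate (h : IsFirstHitTime θ B t x) {d : ℕ} (hd : d < t) :
    IsFirstHitTime θ B (t - d) (θ^[d] x) := by
  refine ⟨by omega, ?_, fun s hs hst => ?_⟩
  · rw [← iterate_add_apply, Nat.sub_add_cancel hd.le]
    exact h.2.1
  · rw [← iterate_add_apply]
    exact h.2.2 (s + d) (by omega) (by omega)

theorem exists_of_exists_iterate_mem (h : ∃ n, 0 < n ∧ θ^[n] x ∈ B) :
    ∃ t, IsFirstHitTime θ B t x := by
  classical
  exact ⟨Nat.find h, (Nat.find_spec h).1, (Nat.find_spec h).2,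
    fun s hs hst hsB => Nat.find_min h hst ⟨hs, hsB⟩⟩

theorem measurableSet_setOf [MeasurableSpace X] (hθ : Measurable θ) (hB : MeasurableSet B) (t : ℕ) :
    MeasurableSet {x | IsFirstHitTime θ B t x} := by
  simp only [IsFirstHitTime, ofPred_and, ofPred_forall]
  exact (MeasurableSet.const _).inter ((hθ.iterate t hB).inter
    (.iInter fun s => .iInter fun _ => .iInter fun _ => (hθ.iterate s hB).compl))

end IsFirstHitTime

theorem abs_average_sub_iterate_eq (h : X → ℝ) (x : X) (n : ℕ) :
    |(1 / (n : ℝ)) * ∑ k ∈ Finset.range n, (h (θ^[k] x) - h (θ^[k+1] x))| =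
      |h x - h (θ^[n] x)| / n := by
  rw [Finset.sum_range_sub' (fun k => h (θ^[k] x)), abs_mul, abs_of_nonneg (by positivity),
    iterate_zero_apply, one_div_mul_eq_div]

theorem le_abs_average_sub_iterate_div {δ γ : ℕ → ℝ} (hδpos : ∀ n, 0 < δ n)
    (hδγ : ∀ n, δ n ≤ γ n) (hγmono : Monotone fun n : ℕ => (n : ℝ) * γ n) {h : X → ℝ} {x : X}
    (hx : 0 ≤ h x) {c : ℝ} (hc : 0 ≤ c) {j N : ℕ} (hj : 0 < j) (hjN : j ≤ N)
    (hjc : c ≤ h (θ^[j] x)) :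
    c / (N * γ N) - h x / γ 1 ≤
      |(1 / (j : ℝ)) * ∑ k ∈ Finset.range j, (h (θ^[k] x) - h (θ^[k+1] x))| / δ j := by
  have hγ₁ : 0 < γ 1 := (hδpos 1).trans_le (hδγ 1)
  have h₁ : γ 1 ≤ j * γ j := by simpa using hγmono (Nat.one_le_iff_ne_zero.2 hj.ne')
  have hjγ : 0 < j * γ j := hγ₁.trans_le h₁
  have hjδ : 0 < j * δ j := mul_pos (Nat.cast_pos.2 hj) (hδpos j)
  rw [abs_average_sub_iterate_eq, div_div]
  calc c / (N * γ N) - h x / γ 1 ≤ c / (j * γ j) - h x / (j * γ j) :=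
        sub_le_sub (div_le_div_of_nonneg_left hc hjγ (hγmono hjN))
          (div_le_div_of_nonneg_left hx hγ₁ h₁)
    _ ≤ (h (θ^[j] x) - h x) / (j * γ j) := by rw [← sub_div]; gcongr
    _ ≤ |h x - h (θ^[j] x)| / (j * γ j) := by rw [abs_sub_comm]; gcongr; exact le_abs_self _
    _ ≤ |h x - h (θ^[j] x)| / (j * δ j) := by gcongr; exact hδγ j

theorem ENNReal.limsup_eq_top_of_forall_exists_le {a : ℕ → ℝ≥0∞} (ha : ∀ n, a n ≠ ∞)
    (hunb : ∀ M : ℝ, ∃ n, ENNReal.ofReal M ≤ a n) : limsup a atTop = ∞ := by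
  by_contra hL
  obtain ⟨n₀, hn₀⟩ := eventually_atTop.1
    (eventually_lt_of_limsup_lt (lt_add_right hL one_ne_zero))
  set S := limsup a atTop + 1 + ∑ n ∈ Finset.range n₀, a n
  have hS : S ≠ ∞ :=
    add_ne_top.2 ⟨add_ne_top.2 ⟨hL, one_ne_top⟩, sum_ne_top.2 fun n _ => ha n⟩
  have hbound : ∀ n, a n ≤ S := fun n => by
    rcases lt_or_ge n n₀ with hn | hn
    · exact (Finset.single_le_sum (fun _ _ => zero_le) (Finset.mem_range.2 hn)).trans le_add_self
    · exact (hn₀ n hn).le.trans (le_add_right le_rfl)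
  obtain ⟨n, hn⟩ := hunb (S.toReal + 1)
  have : S < ENNReal.ofReal (S.toReal + 1) := by
    rw [ENNReal.lt_ofReal_iff_toReal_lt hS]; exact lt_add_one _
  exact (this.trans_le hn).not_ge (hbound n)

theorem limsup_abs_average_sub_iterate_eq_top {δ γ : ℕ → ℝ} (hδpos : ∀ n, 0 < δ n)
    (hδγ : ∀ n, δ n ≤ γ n) (hγmono : Monotone fun n : ℕ => (n : ℝ) * γ n) {h : X → ℝ} {x : X}
    (hx : 0 ≤ h x) {N : ℕ → ℕ}
    (hhit : ∀ m : ℕ, ∃ j, 0 < j ∧ j ≤ N m ∧ (m + 1) * (N m * γ (N m)) ≤ h (θ^[j] x)) :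
    limsup (fun n : ℕ => ENNReal.ofReal
      (|(1 / (n : ℝ)) * ∑ k ∈ Finset.range n, (h (θ^[k] x) - h (θ^[k+1] x))| / δ n)) atTop = ∞ := by
  refine ENNReal.limsup_eq_top_of_forall_exists_le (fun _ => ofReal_ne_top) fun M => ?_
  obtain ⟨m, hm⟩ := exists_nat_ge (M + h x / γ 1)
  obtain ⟨j, hj, hjN, hjc⟩ := hhit m
  have hNγ : 0 < N m * γ (N m) :=
    mul_pos (Nat.cast_pos.2 (hj.trans_le hjN)) ((hδpos _).trans_le (hδγ _))
  have := le_abs_average_sub_iterate_div hδpos hδγ hγmono hx (by positivity) hj hjN hjc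
  rw [mul_div_assoc, div_self hNγ.ne'] at this
  exact ⟨j, ENNReal.ofReal_le_ofReal (by linarith)⟩

section

variable [MeasurableSpace X] {μ : Measure X}

theorem MeasureTheory.MeasurePreserving.nullSingletonClass_of_aperiodic
    [MeasurableSingletonClass X] [IsFiniteMeasure μ] (hθ : MeasurePreserving θ μ μ)
    (haper : μ {x | ∃ n : ℕ, 0 < n ∧ θ^[n] x = x} = 0) : NullSingletonClass μ where
  measure_singleton x := by
    by_contra hx
    obtain ⟨y, hy, m, hm, hmy⟩ :=
      hθ.exists_mem_iterate_mem (measurableSet_singleton x).nullMeasurableSet hx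
    rw [mem_singleton_iff.1 hy] at hmy
    have hper : x ∈ {x | ∃ n : ℕ, 0 < n ∧ θ^[n] x = x} := ⟨m, Nat.pos_of_ne_zero hm, hmy⟩
    exact hx (measure_mono_null (singleton_subset_iff.2 hper) haper)

theorem MeasureTheory.exists_measurableSet_measure_pos_le [StandardBorelSpace X]
    [IsFiniteMeasure μ] [NullSingletonClass μ] (hμ : μ ≠ 0) {ε : ℝ≥0∞} (hε : 0 < ε) :
    ∃ B, MeasurableSet B ∧ 0 < μ B ∧ μ B ≤ ε := by
  obtain ⟨f, hf⟩ := exists_measurableEmbedding_real X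
  set ν := μ.map f
  have : NullSingletonClass ν := ⟨fun t => by
    rw [hf.map_apply]
    exact (Set.subsingleton_singleton.preimage hf.injective).measure_zero μ⟩
  obtain ⟨b, hb⟩ := Measure.nonempty_support (μ := ν)
    ((Measure.map_eq_zero_iff hf.measurable.aemeasurable).not.2 hμ)
  obtain ⟨r, hrε, hr⟩ : ∃ r : ℝ, ν (Icc (b - r) (b + r)) < ε ∧ 0 < r :=
    (((tendsto_measure_Icc ν b).eventually (gt_mem_nhds hε)).filter_mono nhdsWithin_le_nhds
      |>.and (self_mem_nhdsWithin (s := Ioi 0))).exists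
  refine ⟨f ⁻¹' Icc (b - r) (b + r), hf.measurable measurableSet_Icc, ?_, ?_⟩
  · rw [← hf.map_apply]
    exact (Measure.mem_support_iff_forall b).1 hb _ (Icc_mem_nhds (by linarith) (by linarith))
  · rw [← hf.map_apply]
    exact hrε.le

theorem Ergodic.ae_exists_iterate_mem [IsFiniteMeasure μ] (herg : Ergodic θ μ) {B : Set X}
    (hB : MeasurableSet B) (hB₀ : μ B ≠ 0) : ∀ᵐ x ∂μ, ∃ n, 0 < n ∧ θ^[n] x ∈ B := by
  set U := ⋃ n, θ^[n + 1] ⁻¹' B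
  have hU : MeasurableSet U :=
    .iUnion fun n => (herg.toMeasurePreserving.iterate (n + 1)).measurable hB
  have hUinv : θ ⁻¹' U ⊆ U := fun x hx => by
    obtain ⟨n, hn⟩ := mem_iUnion.1 hx
    exact mem_iUnion.2 ⟨n + 1, by rwa [mem_preimage, iterate_succ_apply]⟩
  rcases herg.ae_empty_or_univ_of_preimage_ae_le hU.nullMeasurableSet hUinv.eventuallyLE
    with hU₀ | hU₁
  · have hU₀' : μ U = 0 := (measure_congr hU₀).trans measure_empty
    have : μ (θ ⁻¹' B) = 0 :=
      measure_mono_null (fun x hx => mem_iUnion.2 ⟨0, by simpa using hx⟩) hU₀'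
    exact absurd (by rwa [herg.measure_preimage hB.nullMeasurableSet] at this) hB₀
  · filter_upwards [hU₁.mem_iff] with x hx
    obtain ⟨n, hn⟩ := mem_iUnion.1 (hx.2 trivial)
    exact ⟨n + 1, n.succ_pos, hn⟩

theorem MeasureTheory.MeasurePreserving.measure_le_inv_of_disjoint_preimage_iterate
    [IsProbabilityMeasure μ] (hθ : MeasurePreserving θ μ μ) {D : Set X} (hD : MeasurableSet D)
    {N : ℕ} (hdisj : ∀ d, 0 < d → d < N → Disjoint D (θ^[d] ⁻¹' D)) :
    μ D ≤ (N : ℝ≥0∞)⁻¹ := by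
  have hpd : (Finset.range N : Set ℕ).PairwiseDisjoint (fun i => θ^[i] ⁻¹' D) := by
    intro i hi j hj hij
    wlog hlt : i < j generalizing i j
    · exact (this hj hi hij.symm (by omega)).symm
    have hji : θ^[j] = θ^[j - i] ∘ θ^[i] := by rw [← iterate_add, Nat.sub_add_cancel hlt.le]
    rw [onFun, hji, preimage_comp]
    exact (hdisj (j - i) (by omega) (by simp at hj; omega)).preimage _
  rw [ENNReal.le_inv_iff_mul_le]
  calc μ D * N = ∑ i ∈ Finset.range N, μ (θ^[i] ⁻¹' D) := by
        simp [(hθ.iterate _).measure_preimage hD.nullMeasurableSet, mul_comm]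
    _ = μ (⋃ i ∈ Finset.range N, θ^[i] ⁻¹' D) :=
        (measure_biUnion_finset hpd fun i _ => (hθ.iterate i).measurable hD).symm
    _ ≤ 1 := prob_le_one

theorem Ergodic.exists_measure_le_ae_exists_iterate_mem [StandardBorelSpace X]
    [IsProbabilityMeasure μ] [NullSingletonClass μ] (herg : Ergodic θ μ) {N : ℕ} (hN : 0 < N) :
    ∃ A, MeasurableSet A ∧ μ A ≤ 2 / N ∧ ∀ᵐ x ∂μ, ∃ j, 0 < j ∧ j ≤ N ∧ θ^[j] x ∈ A := by
  obtain ⟨B, hB, hBpos, hBle⟩ := exists_measurableSet_measure_pos_le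
    (IsProbabilityMeasure.ne_zero μ) (ENNReal.inv_pos.2 (natCast_ne_top N))
  set D := {x | ∃ k, IsFirstHitTime θ B (k * N) x}
  have hD : MeasurableSet D := by
    simp only [D, ofPred_exists]
    exact .iUnion fun k => IsFirstHitTime.measurableSet_setOf herg.measurable hB _
  have hDle : μ D ≤ (N : ℝ≥0∞)⁻¹ :=
    herg.measure_le_inv_of_disjoint_preimage_iterate hD fun d hd hdN => by
      refine disjoint_left.2 fun x ⟨k, hk⟩ ⟨l, hl⟩ => ?_
      have hk₀ : 0 < k := Nat.pos_of_ne_zero fun hk₀ => by simpa [hk₀] using hk.1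
      have hdk : d < k * N := hdN.trans_le (Nat.le_mul_of_pos_left N hk₀)
      have hkl : k * N - l * N = d := by have := (hk.iterate hdk).unique hl; omega
      have hNd : N ∣ d := hkl ▸ Nat.dvd_sub (dvd_mul_left N k) (dvd_mul_left N l)
      exact absurd (Nat.le_of_dvd hd hNd) (by omega)
  refine ⟨B ∪ D, hB.union hD, ?_, ?_⟩
  · calc μ (B ∪ D) ≤ μ B + μ D := measure_union_le B D
      _ ≤ (N : ℝ≥0∞)⁻¹ + (N : ℝ≥0∞)⁻¹ := add_le_add hBle hDle
      _ = 2 / N := by rw [← two_mul, div_eq_mul_inv]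
  filter_upwards [herg.ae_exists_iterate_mem hB hBpos.ne'] with x hx
  obtain ⟨t, ht⟩ := IsFirstHitTime.exists_of_exists_iterate_mem hx
  by_cases htN : t ≤ N
  · exact ⟨t, ht.1, htN, .inl ht.2.1⟩
  -- write `t = q N + j` with `0 < j ≤ N`; then the first visit of `θ^[j] x` to `B` is at `q N`
  set q := (t - 1) / N
  have hq : 0 < q := Nat.div_pos (by omega) hN
  have hqt : q * N ≤ t - 1 := Nat.div_mul_le_self (t - 1) N
  have htq : t - 1 < q * N + N := Nat.lt_div_mul_add hN
  refine ⟨t - q * N, by omega, by omega, .inr ⟨q, ?_⟩⟩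
  have := ht.iterate (d := t - q * N) (by omega)
  rwa [show t - (t - q * N) = q * N by omega] at this

theorem MeasureTheory.exists_integrable_ae_le_of_tsum_ne_top {A : ℕ → Set X}
    (hA : ∀ m, MeasurableSet (A m)) {c : ℕ → ℝ≥0∞} (hc : ∑' m, c m * μ (A m) ≠ ∞) :
    ∃ h : X → ℝ, Measurable h ∧ Integrable h μ ∧ 0 ≤ h ∧
      ∀ᵐ x ∂μ, ∀ m, x ∈ A m → (c m).toReal ≤ h x := by
  set H : X → ℝ≥0∞ := fun x => ∑' m, (A m).indicator (fun _ => c m) x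
  have hH : Measurable H := .tsum fun m => measurable_const.indicator (hA m)
  have hHint : ∫⁻ x, H x ∂μ ≠ ∞ := by
    rwa [lintegral_tsum fun m => (measurable_const.indicator (hA m)).aemeasurable,
      tsum_congr fun m => lintegral_indicator_const (hA m) (c m)]
  refine ⟨fun x => (H x).toReal, hH.ennreal_toReal,
    integrable_toReal_of_lintegral_ne_top hH.aemeasurable hHint, fun _ => toReal_nonneg, ?_⟩
  filter_upwards [ae_lt_top hH hHint] with x hx m hxm
  refine toReal_mono hx.ne ?_
  simpa [indicator_of_mem hxm] using
    ENNReal.le_tsum (f := fun m => (A m).indicator (fun _ => c m) x) m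

end

end

theorem stmt19_general {X : Type*} [MeasurableSpace X] [StandardBorelSpace X]
    (μ : Measure X) [IsProbabilityMeasure μ]
    (θ : X → X) (hθ : MeasurePreserving θ μ μ) (herg : Ergodic θ μ)
    (haper : μ {x | ∃ n : ℕ, 0 < n ∧ θ^[n] x = x} = 0)
    (δ γ : ℕ → ℝ) (hδpos : ∀ n, 0 < δ n)
    (hγ0 : Tendsto γ atTop (𝓝 0))
    (hδγ : ∀ n, δ n ≤ γ n)
    (hγmono : Monotone (fun n : ℕ => (n : ℝ) * γ n)) :
    ∃ h : X → ℝ, Measurable h ∧ Integrable h μ ∧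
      ∀ᵐ x ∂μ, Filter.limsup
        (fun n : ℕ => ENNReal.ofReal
          (|(1 / (n : ℝ)) * ∑ k ∈ Finset.range n,
              (h (θ^[k] x) - h (θ^[k+1] x))| / δ n)) atTop = ⊤ := by
  have := hθ.nullSingletonClass_of_aperiodic haper
  have hγpos : ∀ n, 0 < γ n := fun n => (hδpos n).trans_le (hδγ n)
  choose N hN hγN using fun m : ℕ => ((eventually_gt_atTop 0).and
    (hγ0.eventually (eventually_le_nhds (by positivity : (0 : ℝ) < (1 / 2) ^ m / (m + 1))))).exists
  choose A hA hμA hAhit using fun m => herg.exists_measure_le_ae_exists_iterate_mem (hN m)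
  set c : ℕ → ℝ := fun m => (m + 1) * (N m * γ (N m))
  have hc : ∀ m, 0 ≤ c m := fun m => by have := hγpos (N m); positivity
  have hterm : ∀ m, ENNReal.ofReal (c m) * μ (A m) ≤ ENNReal.ofReal (2 * (1 / 2) ^ m) := by
    intro m
    have hNm : (0 : ℝ) < N m := Nat.cast_pos.2 (hN m)
    calc ENNReal.ofReal (c m) * μ (A m) ≤ ENNReal.ofReal (c m) * ENNReal.ofReal (2 / N m) := by
          rw [ofReal_div_of_pos hNm, ofReal_ofNat, ofReal_natCast]; gcongr; exact hμA m
      _ = ENNReal.ofReal (2 * ((m + 1) * γ (N m))) := by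
          rw [← ofReal_mul (hc m)]; congr 1; field_simp; ring
      _ ≤ ENNReal.ofReal (2 * (1 / 2) ^ m) := by
          gcongr; exact (le_div_iff₀' (by positivity)).1 (hγN m)
  have hsum : ∑' m, ENNReal.ofReal (c m) * μ (A m) ≠ ∞ :=
    ne_top_of_le_ne_top ofReal_ne_top <| (ENNReal.tsum_le_tsum hterm).trans_eq
      (ofReal_tsum_of_nonneg (fun _ => by positivity) (summable_geometric_two.mul_left 2)).symm
  obtain ⟨h, hmeas, hint, hnonneg, hhA⟩ := exists_integrable_ae_le_of_tsum_ne_top hA hsum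
  refine ⟨h, hmeas, hint, ?_⟩
  have horbit : ∀ᵐ x ∂μ, ∀ j m, θ^[j] x ∈ A m → c m ≤ h (θ^[j] x) := ae_all_iff.2 fun j => by
    filter_upwards [(hθ.iterate j).quasiMeasurePreserving.ae hhA] with x hx m
    simpa [toReal_ofReal (hc m)] using hx m
  filter_upwards [horbit, ae_all_iff.2 hAhit] with x hxA hxhit
  exact limsup_abs_average_sub_iterate_eq_top hδpos hδγ hγmono (hnonneg x) fun m =>
    (hxhit m).imp fun j ⟨hj, hjN, hjA⟩ => ⟨hj, hjN, hxA j m hjA⟩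

/-- Under the hypotheses of the tower construction, for `δ_n → 0` with
`δ_n ≤ γ_n`, `γ_n → 0` and `n γ_n` increasing to `∞`, there is an `L¹`-coboundary
`f = (I-T)h` with `limsup_n δ_n⁻¹ |M_n f| = ∞` a.e. -/
theorem stmt19 {X : Type*} [MeasurableSpace X] [StandardBorelSpace X]
    (μ : Measure X) [IsProbabilityMeasure μ]
    (θ : X → X) (hθ : MeasurePreserving θ μ μ) (herg : Ergodic θ μ)
    (haper : μ {x | ∃ n : ℕ, 0 < n ∧ θ^[n] x = x} = 0)
    (δ γ : ℕ → ℝ) (hδpos : ∀ n, 0 < δ n)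
    (hδ0 : Tendsto δ atTop (𝓝 0)) (hγ0 : Tendsto γ atTop (𝓝 0))
    (hδγ : ∀ n, δ n ≤ γ n)
    (hγmono : Monotone (fun n : ℕ => (n : ℝ) * γ n))
    (hγtop : Tendsto (fun n : ℕ => (n : ℝ) * γ n) atTop atTop) :
    ∃ h : X → ℝ, Measurable h ∧ Integrable h μ ∧
      ∀ᵐ x ∂μ, Filter.limsup
        (fun n : ℕ => ENNReal.ofReal
          (|(1 / (n : ℝ)) * ∑ k ∈ Finset.range n,
              (h (θ^[k] x) - h (θ^[k+1] x))| / δ n)) atTop = ⊤ :=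
  stmt19_general μ θ hθ herg haper δ γ hδpos hγ0 hδγ hγmono
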